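/- Let ρ : [0,T] → M be a differentiable curve in the Hermitian matrices solving ρ'(t) = -i[H,ρ(t)] + γD(ρ(t)) with D(ρ) = VρVᴴ - ½VᴴVρ - ½ρVᴴV, H Hermitian, γ ≥ 0, and time-independent coefficients. If ρ(0) is positive semidefinite, then ρ(t) is positive semidefinite for all t ∈ [0,T]. -/

import Mathlib

/-!
Writing `L = √γ V` and `A = -iH - (γ/2) VᴴV`, the equation reads `ρ' = Aρ + ρAᴴ + LρLᴴ`. In the
interaction picture `σ(t) = e^{-tA} ρ(t) (e^{-tA})ᴴ` the drift disappears and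
`σ' = C(t) σ C(t)ᴴ` with `C(t) = e^{-tA} L e^{tA}`, a completely positive right-hand side.

If `‖C(t)‖ ≤ c` on `[0, T]`, the barrier `P(t) = σ(t) + ε e^{c²t}` stays positive semidefinite:
while it is, its derivative `C P Cᴴ + ε e^{c²t} (c² - C Cᴴ)` is positive semidefinite, so `P`
increases in the Loewner order and `P(t) ≥ P(0) ≥ ε`, and this strict bound keeps `P` positive a
little longer (continuous induction). Letting `ε → 0` gives `σ(t) ≥ 0`, hence
`ρ(t) = e^{tA} σ(t) (e^{tA})ᴴ ≥ 0`.
-/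

open Matrix
open scoped ComplexOrder

attribute [local instance] Matrix.frobeniusNormedAddCommGroup
  Matrix.frobeniusNormedRing Matrix.frobeniusNormedAlgebra

open Set Filter Topology WithLp NormedSpace

lemma isClosed_setOf_forall_mem_Ico {α : Type*} [TopologicalSpace α] [LinearOrder α]
    [ClosedIicTopology α] (p : α → Prop) (a : α) :
    IsClosed {t | ∀ u ∈ Ico a t, p u} := by
  refine isClosed_of_closure_subset fun t ht u hu => ?_
  obtain ⟨t', hut', ht'⟩ := mem_closure_iff_nhds.1 ht (Ioi u) (Ioi_mem_nhds hu.2)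
  exact ht' u ⟨hu.1, hut'⟩

lemma forall_mem_Icc_of_forall_mem_Ico_imp_eventually {α : Type*}
    [ConditionallyCompleteLinearOrder α] [TopologicalSpace α] [OrderTopology α] [DenselyOrdered α]
    [NoMaxOrder α] {p : α → Prop} {a b : α}
    (h : ∀ t ∈ Icc a b, (∀ u ∈ Ico a t, p u) → ∀ᶠ u in 𝓝[Icc a b] t, p u) :
    ∀ t ∈ Icc a b, p t := by
  have hsub : Icc a b ⊆ {t | ∀ u ∈ Ico a t, p u} := by
    refine ((isClosed_setOf_forall_mem_Ico p a).inter isClosed_Icc)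
      |>.Icc_subset_of_forall_mem_nhdsWithin (fun u hu => absurd hu.2 (not_lt.2 hu.1))
      fun t ⟨ht, htab⟩ => ?_
    have hright : ∀ᶠ u in 𝓝[≥] t, p u :=
      nhdsWithin_le_of_mem (ordConnected_Icc.mem_nhdsGE (Ico_subset_Icc_self htab)
        (right_mem_Icc.2 (htab.1.trans htab.2.le)) htab.2) (h t (Ico_subset_Icc_self htab) ht)
    obtain ⟨c, htc, hc⟩ := mem_nhdsGE_iff_exists_Ico_subset.1 hright
    filter_upwards [Ioo_mem_nhdsGT htc] with t' ht' u hu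
    rcases lt_or_ge u t with hut | htu
    · exact ht u ⟨hu.1, hut⟩
    · exact hc ⟨htu, hu.2.trans ht'.2⟩
  exact fun t ht => (h t ht (hsub ht)).self_of_nhdsWithin ht

namespace Matrix

variable {𝕜 ι : Type*} [RCLike 𝕜] [Fintype ι]

lemma star_dotProduct_self_eq_norm_sq (x : ι → 𝕜) :
    star x ⬝ᵥ x = ((‖toLp 2 x‖ ^ 2 : ℝ) : 𝕜) := by
  rw [RCLike.ofReal_pow, ← inner_self_eq_norm_sq_to_K, EuclideanSpace.inner_eq_star_dotProduct,
    dotProduct_comm]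

lemma norm_toLp_mulVec_le (M : Matrix ι ι 𝕜) (x : ι → 𝕜) :
    ‖toLp 2 (M *ᵥ x)‖ ≤ ‖M‖ * ‖toLp 2 x‖ := by
  simpa only [← frobenius_norm_replicateCol (ι := Unit), replicateCol_mulVec]
    using frobenius_norm_mul M (replicateCol Unit x)

lemma norm_star_dotProduct_mulVec_le (M : Matrix ι ι 𝕜) (x : ι → 𝕜) :
    ‖star x ⬝ᵥ (M *ᵥ x)‖ ≤ ‖M‖ * ‖toLp 2 x‖ ^ 2 := by
  calc ‖star x ⬝ᵥ (M *ᵥ x)‖ = ‖inner 𝕜 (toLp 2 x) (toLp 2 (M *ᵥ x))‖ := by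
        rw [EuclideanSpace.inner_eq_star_dotProduct, dotProduct_comm]
    _ ≤ ‖toLp 2 x‖ * (‖M‖ * ‖toLp 2 x‖) :=
        (norm_inner_le_norm _ _).trans (by gcongr; exact norm_toLp_mulVec_le M x)
    _ = ‖M‖ * ‖toLp 2 x‖ ^ 2 := by ring

lemma PosSemidef.of_re_dotProduct_mulVec_nonneg {M : Matrix ι ι 𝕜} (hM : M.IsHermitian)
    (h : ∀ x, 0 ≤ RCLike.re (star x ⬝ᵥ (M *ᵥ x))) : M.PosSemidef :=
  .of_dotProduct_mulVec_nonneg hM fun x =>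
    RCLike.nonneg_iff.mpr ⟨h x, hM.im_star_dotProduct_mulVec_self x⟩

lemma re_star_dotProduct_mulVec_ge (M : Matrix ι ι 𝕜) (x : ι → 𝕜) :
    -(‖M‖ * ‖toLp 2 x‖ ^ 2) ≤ RCLike.re (star x ⬝ᵥ (M *ᵥ x)) :=
  neg_le_of_abs_le ((RCLike.abs_re_le_norm _).trans (norm_star_dotProduct_mulVec_le M x))

variable [DecidableEq ι]

lemma re_star_dotProduct_smul_one_mulVec (c : ℝ) (x : ι → 𝕜) :
    RCLike.re (star x ⬝ᵥ ((c • (1 : Matrix ι ι 𝕜)) *ᵥ x)) = c * ‖toLp 2 x‖ ^ 2 := by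
  rw [smul_mulVec, one_mulVec, dotProduct_smul, RCLike.smul_re, star_dotProduct_self_eq_norm_sq,
    RCLike.ofReal_re]

lemma posSemidef_sq_smul_one_sub_mul_conjTranspose {C : Matrix ι ι 𝕜} {c : ℝ} (hC : ‖C‖ ≤ c) :
    (c ^ 2 • 1 - C * Cᴴ).PosSemidef := by
  refine .of_re_dotProduct_mulVec_nonneg ?_ fun x => ?_
  · exact (isHermitian_one.smul (IsSelfAdjoint.all _)).sub (isHermitian_mul_conjTranspose_self C)
  have hCx : star x ⬝ᵥ ((C * Cᴴ) *ᵥ x) = star (Cᴴ *ᵥ x) ⬝ᵥ (Cᴴ *ᵥ x) := by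
    rw [← mulVec_mulVec, dotProduct_mulVec, star_mulVec, conjTranspose_conjTranspose]
  have hbound := norm_toLp_mulVec_le Cᴴ x
  rw [frobenius_norm_conjTranspose] at hbound
  rw [sub_mulVec, dotProduct_sub, map_sub, re_star_dotProduct_smul_one_mulVec, hCx,
    star_dotProduct_self_eq_norm_sq, RCLike.ofReal_re, sub_nonneg, ← mul_pow]
  exact pow_le_pow_left₀ (norm_nonneg _) (hbound.trans (by gcongr)) 2

lemma PosSemidef.of_forall_pos_add_smul_one {M : Matrix ι ι 𝕜} (hM : M.IsHermitian)
    (h : ∀ ε : ℝ, 0 < ε → (M + ε • 1).PosSemidef) : M.PosSemidef := by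
  refine .of_re_dotProduct_mulVec_nonneg hM fun x => ?_
  refine le_of_forall_pos_le_add fun ε hε => ?_
  have := (h (ε / (‖toLp 2 x‖ ^ 2 + 1)) (by positivity)).re_dotProduct_nonneg x
  rw [add_mulVec, dotProduct_add, map_add, re_star_dotProduct_smul_one_mulVec] at this
  have hle : ε / (‖toLp 2 x‖ ^ 2 + 1) * ‖toLp 2 x‖ ^ 2 ≤ ε := by
    rw [div_mul_eq_mul_div, div_le_iff₀ (by positivity)]
    nlinarith
  linarith

lemma _root_.Filter.Tendsto.eventually_posSemidef {α : Type*} {l : Filter α}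
    {M : α → Matrix ι ι 𝕜} {M₀ : Matrix ι ι 𝕜} {ε : ℝ} (hM : Tendsto M l (𝓝 M₀))
    (hH : ∀ᶠ a in l, (M a).IsHermitian) (hε : 0 < ε) (h₀ : (M₀ - ε • 1).PosSemidef) :
    ∀ᶠ a in l, (M a).PosSemidef := by
  filter_upwards [hH, tendsto_iff_norm_sub_tendsto_zero.mp hM |>.eventually (gt_mem_nhds hε)]
    with a ha hclose
  refine .of_re_dotProduct_mulVec_nonneg ha fun x => ?_
  have hsplit : M a = (M₀ - ε • 1) + ε • 1 + (M a - M₀) := by abel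
  rw [hsplit, add_mulVec, add_mulVec, dotProduct_add, dotProduct_add, map_add, map_add,
    re_star_dotProduct_smul_one_mulVec]
  have hgap := h₀.re_dotProduct_nonneg x
  have hpert := re_star_dotProduct_mulVec_ge (M a - M₀) x
  have hsmall : ‖M a - M₀‖ * ‖toLp 2 x‖ ^ 2 ≤ ε * ‖toLp 2 x‖ ^ 2 := by gcongr
  linarith

lemma _root_.HasDerivAt.re_star_dotProduct_mulVec {P : ℝ → Matrix ι ι 𝕜} {P' : Matrix ι ι 𝕜}
    {t : ℝ} (hP : HasDerivAt P P' t) (x : ι → 𝕜) :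
    HasDerivAt (fun s => RCLike.re (star x ⬝ᵥ (P s *ᵥ x))) (RCLike.re (star x ⬝ᵥ (P' *ᵥ x))) t := by
  let q : Matrix ι ι 𝕜 →ₗ[ℝ] ℝ :=
    { toFun := fun M => RCLike.re (star x ⬝ᵥ (M *ᵥ x))
      map_add' := fun M N => by simp only [add_mulVec, dotProduct_add, map_add]
      map_smul' := fun r M => by
        simp only [smul_mulVec, dotProduct_smul, RCLike.smul_re, RingHom.id_apply, smul_eq_mul] }
  exact q.toContinuousLinearMap.hasFDerivAt.comp_hasDerivAt t hP

lemma posSemidef_sub_of_hasDerivAt {P P' : ℝ → Matrix ι ι 𝕜} {a b : ℝ} (hab : a ≤ b)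
    (hH : (P b - P a).IsHermitian) (hP : ∀ t ∈ Icc a b, HasDerivAt P (P' t) t)
    (hP' : ∀ t ∈ Ioo a b, (P' t).PosSemidef) : (P b - P a).PosSemidef := by
  refine .of_re_dotProduct_mulVec_nonneg hH fun x => ?_
  have hmono : MonotoneOn (fun s => RCLike.re (star x ⬝ᵥ (P s *ᵥ x))) (Icc a b) := by
    refine monotoneOn_of_hasDerivWithinAt_nonneg (f' := fun s => RCLike.re (star x ⬝ᵥ (P' s *ᵥ x)))
      (convex_Icc a b)
      (fun t ht => ((hP t ht).re_star_dotProduct_mulVec x).continuousAt.continuousWithinAt)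
      (fun t ht => ?_) (fun t ht => ?_) <;> rw [interior_Icc] at ht
    · exact ((hP t (Ioo_subset_Icc_self ht)).re_star_dotProduct_mulVec x).hasDerivWithinAt
    · exact (hP' t ht).re_dotProduct_nonneg x
  rw [sub_mulVec, dotProduct_sub, map_sub, sub_nonneg]
  exact hmono (left_mem_Icc.2 hab) (right_mem_Icc.2 hab) hab

lemma posSemidef_add_exp_smul_one_of_hasDerivAt {σ C : ℝ → Matrix ι ι 𝕜} {T c ε : ℝ}
    (hC : ∀ t ∈ Icc 0 T, ‖C t‖ ≤ c) (hσH : ∀ t ∈ Icc 0 T, (σ t).IsHermitian)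
    (hσ : ∀ t ∈ Icc 0 T, HasDerivAt σ (C t * σ t * (C t)ᴴ) t) (h0 : (σ 0).PosSemidef)
    (hε : 0 < ε) : ∀ t ∈ Icc 0 T, (σ t + (ε * Real.exp (c ^ 2 * t)) • 1).PosSemidef := by
  let a : ℝ → ℝ := fun t => ε * Real.exp (c ^ 2 * t)
  let P : ℝ → Matrix ι ι 𝕜 := fun t => σ t + a t • 1
  have hPH : ∀ t ∈ Icc 0 T, (P t).IsHermitian := fun t ht =>
    (hσH t ht).add (isHermitian_one.smul (IsSelfAdjoint.all _))
  have hP' : ∀ t ∈ Icc 0 T,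
      HasDerivAt P (C t * P t * (C t)ᴴ + a t • (c ^ 2 • 1 - C t * (C t)ᴴ)) t := by
    intro t ht
    have ha' : HasDerivAt a (a t * c ^ 2) t := by
      simpa [a, mul_comm, mul_left_comm, mul_assoc] using
        ((hasDerivAt_id t).const_mul (c ^ 2)).exp.const_mul ε
    refine ((hσ t ht).add (ha'.smul_const (1 : Matrix ι ι 𝕜))).congr_deriv ?_
    simp only [P, mul_add, add_mul, Matrix.mul_smul, Matrix.smul_mul, mul_one, smul_sub,
      smul_smul]
    module
  refine forall_mem_Icc_of_forall_mem_Ico_imp_eventually fun t ht hgood => ?_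
  have hmono : (P t - P 0).PosSemidef := by
    refine posSemidef_sub_of_hasDerivAt ht.1
      ((hPH t ht).sub (hPH 0 (left_mem_Icc.2 (ht.1.trans ht.2))))
      (fun u hu => hP' u ⟨hu.1, hu.2.trans ht.2⟩) fun u hu => ?_
    have huT : u ∈ Icc 0 T := ⟨hu.1.le, hu.2.le.trans ht.2⟩
    exact ((hgood u ⟨hu.1.le, hu.2⟩).mul_mul_conjTranspose_same (C u)).add
      ((posSemidef_sq_smul_one_sub_mul_conjTranspose (hC u huT)).smul (by positivity))
  have hgap : (P t - ε • 1).PosSemidef := by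
    convert hmono.add h0 using 1
    simp only [P, a, mul_zero, Real.exp_zero, mul_one]
    abel
  exact ((hP' t ht).continuousAt.continuousWithinAt (s := Icc 0 T)).tendsto.eventually_posSemidef
    (eventually_nhdsWithin_of_forall hPH) hε hgap

theorem PosSemidef.of_hasDerivAt_mul_mul_conjTranspose {σ C : ℝ → Matrix ι ι 𝕜} {T c : ℝ}
    (hC : ∀ t ∈ Icc 0 T, ‖C t‖ ≤ c) (hσH : ∀ t ∈ Icc 0 T, (σ t).IsHermitian)
    (hσ : ∀ t ∈ Icc 0 T, HasDerivAt σ (C t * σ t * (C t)ᴴ) t) (h0 : (σ 0).PosSemidef) :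
    ∀ t ∈ Icc 0 T, (σ t).PosSemidef := fun t ht =>
  .of_forall_pos_add_smul_one (hσH t ht) fun δ hδ => by
    have := posSemidef_add_exp_smul_one_of_hasDerivAt hC hσH hσ h0
      (ε := δ / Real.exp (c ^ 2 * t)) (by positivity) t ht
    rwa [div_mul_cancel₀ _ (Real.exp_pos _).ne'] at this

lemma exp_smul_mul_exp_smul_neg (A : Matrix ι ι 𝕜) (t : ℝ) : exp (t • A) * exp (t • -A) = 1 := by
  rw [smul_neg, ← exp_add_of_commute _ _ (Commute.refl (t • A)).neg_right, add_neg_cancel, exp_zero]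

lemma hasDerivAt_exp_smul_neg_mul_mul_conjTranspose {A R : Matrix ι ι 𝕜} {ρ : ℝ → Matrix ι ι 𝕜}
    {t : ℝ} (hρ : HasDerivAt ρ (A * ρ t + ρ t * Aᴴ + R) t) :
    HasDerivAt (fun s => exp (s • -A) * ρ s * (exp (s • -A))ᴴ)
      (exp (t • -A) * R * (exp (t • -A))ᴴ) t := by
  have hU := hasDerivAt_exp_smul_const (𝕂 := ℝ) (-A) t
  refine ((hU.mul hρ).mul hU.star).congr_deriv ?_
  simp only [Pi.mul_apply, star_eq_conjTranspose, conjTranspose_mul, conjTranspose_neg]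
  noncomm_ring

theorem PosSemidef.of_hasDerivAt_lindblad {A V : Matrix ι ι 𝕜} {ρ : ℝ → Matrix ι ι 𝕜} {T : ℝ}
    (hρH : ∀ t ∈ Icc 0 T, (ρ t).IsHermitian)
    (hρ : ∀ t ∈ Icc 0 T, HasDerivAt ρ (A * ρ t + ρ t * Aᴴ + V * ρ t * Vᴴ) t)
    (h0 : (ρ 0).PosSemidef) : ∀ t ∈ Icc 0 T, (ρ t).PosSemidef := by
  let U : ℝ → Matrix ι ι 𝕜 := fun s => exp (s • -A)
  let W : ℝ → Matrix ι ι 𝕜 := fun s => exp (s • A)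
  let σ : ℝ → Matrix ι ι 𝕜 := fun s => U s * ρ s * (U s)ᴴ
  let C : ℝ → Matrix ι ι 𝕜 := fun s => U s * V * W s
  have hWU (s : ℝ) : W s * U s = 1 := exp_smul_mul_exp_smul_neg A s
  have hUW (s : ℝ) : (U s)ᴴ * (W s)ᴴ = 1 := by rw [← conjTranspose_mul, hWU, conjTranspose_one]
  have hρσ (s : ℝ) : ρ s = W s * σ s * (W s)ᴴ := by
    simp only [σ, ← mul_assoc, hWU, one_mul]
    simp only [mul_assoc, hUW, mul_one]
  have hCσ (s : ℝ) : C s * σ s * (C s)ᴴ = U s * (V * ρ s * Vᴴ) * (U s)ᴴ := by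
    simp only [C, σ, conjTranspose_mul, mul_assoc]
    simp only [← mul_assoc (W s), hWU, ← mul_assoc ((U s)ᴴ), hUW, one_mul]
  obtain ⟨c, hc⟩ : ∃ c, ∀ t ∈ Icc 0 T, ‖C t‖ ≤ c :=
    isCompact_Icc.exists_bound_of_continuousOn (by fun_prop)
  have hσ : ∀ t ∈ Icc 0 T, (σ t).PosSemidef := by
    refine PosSemidef.of_hasDerivAt_mul_mul_conjTranspose hc
      (fun t ht => isHermitian_mul_mul_conjTranspose _ (hρH t ht)) (fun t ht => ?_) ?_
    · rw [hCσ]; exact hasDerivAt_exp_smul_neg_mul_mul_conjTranspose (hρ t ht)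
    · simpa [σ, U] using h0
  intro t ht
  rw [hρσ t]
  exact (hσ t ht).mul_mul_conjTranspose_same (W t)

end Matrix

lemma lindblad_eq_drift_add_jump {ι : Type*} [Fintype ι] {H V ρ : Matrix ι ι ℂ}
    (hH : H.IsHermitian) {γ : ℝ} (hγ : 0 ≤ γ) :
    (-Complex.I) • (H * ρ - ρ * H) +
        (γ : ℂ) • (V * ρ * Vᴴ - (1/2 : ℂ) • (Vᴴ * V * ρ) - (1/2 : ℂ) • (ρ * (Vᴴ * V))) =
      (-Complex.I • H - (γ / 2 : ℂ) • (Vᴴ * V)) * ρ +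
        ρ * (-Complex.I • H - (γ / 2 : ℂ) • (Vᴴ * V))ᴴ + (√γ • V) * ρ * (√γ • V)ᴴ := by
  have hjump : (√γ • V) * ρ * (√γ • V)ᴴ = (γ : ℂ) • (V * ρ * Vᴴ) := by
    rw [conjTranspose_smul, star_trivial, smul_mul_assoc, smul_mul_assoc, mul_smul_comm, smul_smul,
      Real.mul_self_sqrt hγ, Complex.coe_smul]
  rw [hjump, conjTranspose_sub, conjTranspose_smul, conjTranspose_smul, hH.eq, conjTranspose_mul,
    conjTranspose_conjTranspose]
  simp only [star_neg, Complex.star_def, Complex.conj_I, map_div₀, Complex.conj_ofReal, map_ofNat]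
  simp only [smul_sub, sub_mul, mul_sub, smul_mul_assoc, mul_smul_comm, smul_smul, mul_assoc]
  module

theorem lindblad_positivity_preservation_general {n : ℕ} (T : ℝ)
    (H V : Matrix (Fin n) (Fin n) ℂ) (hH : H.IsHermitian) (γ : ℝ) (hγ : 0 ≤ γ)
    (ρ : ℝ → Matrix (Fin n) (Fin n) ℂ)
    (hherm : ∀ t ∈ Set.Icc (0:ℝ) T, (ρ t).IsHermitian)
    (hρ : ∀ t ∈ Set.Icc (0:ℝ) T, HasDerivAt ρ
      ((-Complex.I) • (H * ρ t - ρ t * H) +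
        (γ : ℂ) • (V * ρ t * Vᴴ - (1/2 : ℂ) • (Vᴴ * V * ρ t)
          - (1/2 : ℂ) • (ρ t * (Vᴴ * V)))) t)
    (h0 : (ρ 0).PosSemidef) :
    ∀ t ∈ Set.Icc (0:ℝ) T, (ρ t).PosSemidef :=
  PosSemidef.of_hasDerivAt_lindblad hherm
    (fun t ht => (hρ t ht).congr_deriv (lindblad_eq_drift_add_jump hH hγ)) h0

/-- Positivity preservation for the (time-independent) Lindblad equation:
if `ρ : [0,T] → Hermitian matrices` solves `ρ' = -i[H,ρ] + γ D(ρ)` with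
`D(ρ) = VρVᴴ - ½VᴴVρ - ½ρVᴴV`, `H` Hermitian, `γ ≥ 0`, and `ρ(0)` is positive
semidefinite, then `ρ(t)` is positive semidefinite for all `t ∈ [0,T]`. -/
theorem lindblad_positivity_preservation {n : ℕ} (T : ℝ) (hT : 0 ≤ T)
    (H V : Matrix (Fin n) (Fin n) ℂ) (hH : H.IsHermitian) (γ : ℝ) (hγ : 0 ≤ γ)
    (ρ : ℝ → Matrix (Fin n) (Fin n) ℂ)
    (hherm : ∀ t ∈ Set.Icc (0:ℝ) T, (ρ t).IsHermitian)
    (hρ : ∀ t ∈ Set.Icc (0:ℝ) T, HasDerivAt ρ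
      ((-Complex.I) • (H * ρ t - ρ t * H) +
        (γ : ℂ) • (V * ρ t * Vᴴ - (1/2 : ℂ) • (Vᴴ * V * ρ t)
          - (1/2 : ℂ) • (ρ t * (Vᴴ * V)))) t)
    (h0 : (ρ 0).PosSemidef) :
    ∀ t ∈ Set.Icc (0:ℝ) T, (ρ t).PosSemidef :=
  lindblad_positivity_preservation_general T H V hH γ hγ ρ hherm hρ h0
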